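/- Let k be a field of characteristic zero. Suppose θ₁ ∘ θ₂ ∘ ⋯ ∘ θ_r = τ₁ ∘ τ₂ ∘ ⋯ ∘ τ_s as polynomials in k[z], where each θ_i and each τ_j is a polynomial of the form z^d + c with d ≥ 2 an integer and c ∈ k nonzero (and where an empty composition denotes the identity polynomial z). Then r = s and θ_i = τ_i for every i. In other words, the monoid generated under composition by the set S = {z^d + c : d ≥ 2, c ∈ k, c ≠ 0} is free. -/

import Mathlib

open Polynomial

/-- Composition of a finite list of polynomials `[φ₁, …, φₘ]` as a single
polynomial `φ₁ ∘ φ₂ ∘ ⋯ ∘ φₘ`, the empty list giving the identity `X`. -/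
noncomputable def compList {k : Type*} [Field k] (L : List (Polynomial k)) : Polynomial k :=
  L.foldr (fun φ g => φ.comp g) Polynomial.X

/-- The set of unicritical polynomials `z^d + c` with `d ≥ 2` and `c ≠ 0`. -/
def unicritSet (k : Type*) [Field k] : Set (Polynomial k) :=
  {φ : Polynomial k | ∃ d : ℕ, 2 ≤ d ∧ ∃ c : k, c ≠ 0 ∧ φ = X ^ d + C c}

namespace UnicritAux

open UniqueFactorizationMonoid UniqueFactorizationDomain

variable {k : Type*} [Field k]

lemma compList_nil : compList ([] : List (Polynomial k)) = X := rfl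

lemma compList_cons (φ : Polynomial k) (L : List (Polynomial k)) :
    compList (φ :: L) = φ.comp (compList L) := rfl

lemma compList_cons' (d : ℕ) (c : k) (T : List (Polynomial k)) :
    compList ((X ^ d + C c) :: T) = (compList T) ^ d + C c := by
  rw [compList_cons, add_comp, pow_comp, X_comp, C_comp]

lemma compList_monic {L : List (Polynomial k)} (h : ∀ φ ∈ L, φ ∈ unicritSet k) :
    (compList L).Monic ∧ 1 ≤ (compList L).natDegree := by
  induction L with
  | nil => exact ⟨monic_X, by simp [compList_nil]⟩
  | cons φ T ih =>
    obtain ⟨hM, hD⟩ := ih (fun ψ hψ => h ψ (List.mem_cons_of_mem _ hψ))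
    obtain ⟨d, hd, c, hc, rfl⟩ := h φ (List.mem_cons_self)
    rw [compList_cons']
    have hpm : ((compList T) ^ d).Monic := hM.pow d
    have hpd : 0 < ((compList T) ^ d).natDegree := by
      rw [natDegree_pow]; positivity
    constructor
    · refine hpm.add_of_left ?_
      exact lt_of_le_of_lt degree_C_le (natDegree_pos_iff_degree_pos.mp hpd)
    · rw [natDegree_add_C, natDegree_pow]
      nlinarith

lemma two_le_natDegree_compList {L : List (Polynomial k)}
    (h : ∀ φ ∈ L, φ ∈ unicritSet k) (hne : L ≠ []) :
    2 ≤ (compList L).natDegree := by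
  cases L with
  | nil => exact absurd rfl hne
  | cons φ T =>
    obtain ⟨hM, hD⟩ := compList_monic (fun ψ hψ => h ψ (List.mem_cons_of_mem _ hψ))
    obtain ⟨d, hd, c, hc, rfl⟩ := h φ (List.mem_cons_self)
    rw [compList_cons', natDegree_add_C, natDegree_pow]
    nlinarith

/-- Mason–Stothers consequence: `F^d + κ = G^e` is impossible for nonconstant `F, G`,
`d, e ≥ 2` and `κ ≠ 0`. -/
lemma masonA [CharZero k] {F G : Polynomial k} {d e : ℕ} {κ : k}
    (hd : 2 ≤ d) (he : 2 ≤ e) (hF : 1 ≤ F.natDegree) (hG : 1 ≤ G.natDegree)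
    (hκ : κ ≠ 0) (h : F ^ d + C κ = G ^ e) : False := by
  classical
  have hFne : F ≠ 0 := fun h0 => by simp [h0] at hF
  have hGne : G ≠ 0 := fun h0 => by simp [h0] at hG
  have ha : (F ^ d) ≠ 0 := pow_ne_zero _ hFne
  have hb : (C κ : Polynomial k) ≠ 0 := by simpa using hκ
  have hcc : (-(G ^ e) : Polynomial k) ≠ 0 := neg_ne_zero.mpr (pow_ne_zero _ hGne)
  have hsum : F ^ d + C κ + -(G ^ e) = 0 := by rw [h]; ring
  have hbu : IsUnit (C κ : Polynomial k) := isUnit_C.mpr hκ.isUnit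
  have hunit : ∀ y : Polynomial k, IsCoprime (C κ) y := fun y =>
    ⟨C κ⁻¹, 0, by rw [zero_mul, add_zero, ← C_mul, inv_mul_cancel₀ hκ, C_1]⟩
  have hab : IsCoprime (F ^ d) (C κ : Polynomial k) := (hunit _).symm
  have hbc : IsCoprime (C κ : Polynomial k) (-(G ^ e)) := hunit _
  have hca : IsCoprime (-(G ^ e)) (F ^ d) := by
    refine ⟨-C κ⁻¹, -C κ⁻¹, ?_⟩
    have hsum' : -(G ^ e) + F ^ d = -C κ := by
      rw [← h]; ring
    calc -C κ⁻¹ * -(G ^ e) + -C κ⁻¹ * F ^ d = -C κ⁻¹ * (-(G ^ e) + F ^ d) := by ring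
    _ = -C κ⁻¹ * -C κ := by rw [hsum']
    _ = C (κ⁻¹ * κ) := by rw [neg_mul_neg, ← C_mul]
    _ = 1 := by rw [inv_mul_cancel₀ hκ, C_1]
  rcases Polynomial.abc ha hb hcc hab hsum with ⟨h1, -, h3⟩ | ⟨h1, -, -⟩
  · -- degree bounds
    have hassoc : radical (F ^ d * C κ * -(G ^ e)) = radical (F ^ d * G ^ e) := by
      have e1 : F ^ d * C κ * -(G ^ e) = -(F ^ d * G ^ e * C κ) := by ring
      rw [e1, radical_neg]
      exact radical_eq_of_associated (associated_mul_unit_left _ _ hbu)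
    have hcop : IsCoprime (F ^ d) (G ^ e) := by
      have := hca.symm.neg_right
      rwa [neg_neg] at this
    have hmul : radical (F ^ d * G ^ e) = radical F * radical G := by
      rw [radical_mul hcop.isRelPrime, radical_pow F (by omega), radical_pow G (by omega)]
    have hrF : (radical F).natDegree ≤ F.natDegree :=
      natDegree_le_of_dvd (radical_dvd_self (a := F)) hFne
    have hrG : (radical G).natDegree ≤ G.natDegree :=
      natDegree_le_of_dvd (radical_dvd_self (a := G)) hGne
    have hndmul : (radical F * radical G).natDegree =
        (radical F).natDegree + (radical G).natDegree :=
      natDegree_mul (radical_ne_zero (a := F)) (radical_ne_zero (a := G))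
    rw [hassoc, hmul, hndmul] at h1 h3
    rw [natDegree_pow] at h1
    rw [natDegree_neg, natDegree_pow] at h3
    have h2m : 2 * F.natDegree ≤ d * F.natDegree := Nat.mul_le_mul_right _ hd
    have h2n : 2 * G.natDegree ≤ e * G.natDegree := Nat.mul_le_mul_right _ he
    omega
  · -- derivative of F^d vanishes
    have : (F ^ d).natDegree = 0 := natDegree_eq_zero_of_derivative_eq_zero h1
    rw [natDegree_pow] at this
    have : 2 * F.natDegree ≤ d * F.natDegree := Nat.mul_le_mul_right _ hd
    omega

lemma monic_pow_cancel [CharZero k] {a b : Polynomial k} (ha : a.Monic) (hb : b.Monic)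
    {g : ℕ} (hg : 0 < g) (h : a ^ g = b ^ g) : a = b := by
  have hdeg : a.natDegree = b.natDegree := by
    have h' := congrArg natDegree h
    rw [natDegree_pow, natDegree_pow] at h'
    exact Nat.eq_of_mul_eq_mul_left hg h'
  have hgs := geom_sum₂_mul a b g
  rw [h, sub_self] at hgs
  rcases mul_eq_zero.mp hgs with h' | h'
  · exfalso
    have hterm : ∀ i ∈ Finset.range g,
        (a ^ i * b ^ (g - 1 - i)).coeff ((g - 1) * a.natDegree) = 1 := by
      intro i hi
      have hi' : i < g := Finset.mem_range.mp hi
      have hm : (a ^ i * b ^ (g - 1 - i)).Monic := (ha.pow _).mul (hb.pow _)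
      have hnd : (a ^ i * b ^ (g - 1 - i)).natDegree = (g - 1) * a.natDegree := by
        rw [(ha.pow i).natDegree_mul (hb.pow (g - 1 - i)), natDegree_pow, natDegree_pow,
          ← hdeg]
        have hsplit : i + (g - 1 - i) = g - 1 := by omega
        rw [← add_mul, hsplit]
      rw [← hnd]
      exact hm.coeff_natDegree
    have hc := congrArg (fun p : Polynomial k => p.coeff ((g - 1) * a.natDegree)) h'
    simp only [finset_sum_coeff, coeff_zero] at hc
    rw [Finset.sum_congr rfl hterm, Finset.sum_const, Finset.card_range, nsmul_eq_mul,
      mul_one] at hc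
    exact (Nat.cast_ne_zero (R := k)).mpr hg.ne' hc
  · exact sub_eq_zero.mp h'

lemma exists_pow_eq {F G : Polynomial k} (hF : F.Monic) (hG : G.Monic) {p q : ℕ}
    (hq : 0 < q) (hpq : Nat.Coprime p q) (h : F ^ p = G ^ q) :
    ∃ H : Polynomial k, F = H ^ q := by
  let K := FractionRing (Polynomial k)
  let f := algebraMap (Polynomial k) K
  have hinj := IsFractionRing.injective (Polynomial k) K
  have h' : (f F) ^ p = (f G) ^ q := by rw [← map_pow, ← map_pow, h]
  obtain ⟨x, hx, -⟩ := (pow_eq_pow_iff_of_coprime hpq).mp h'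
  have hint : IsIntegral (Polynomial k) x := by
    refine ⟨X ^ q - C F, monic_X_pow_sub_C F hq.ne', ?_⟩
    rw [eval₂_sub, eval₂_X_pow, eval₂_C, ← hx, sub_self]
  obtain ⟨H, hH⟩ := IsIntegrallyClosed.isIntegral_iff.mp hint
  refine ⟨H, hinj ?_⟩
  rw [map_pow, hH, ← hx]

/-- The key impossibility: if `F` is a composition of unicritical polynomials and
`F ^ d = G ^ e` with `d < e`, we get a contradiction. -/
lemma no_lt [CharZero k] {T : List (Polynomial k)} (hT : ∀ φ ∈ T, φ ∈ unicritSet k)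
    {G : Polynomial k} (hGm : G.Monic) (hG1 : 1 ≤ G.natDegree)
    {d e : ℕ} (hd : 2 ≤ d) (hlt : d < e)
    (h : (compList T) ^ d = G ^ e) : False := by
  obtain ⟨hFm, hF1⟩ := compList_monic hT
  set F := compList T with hFdef
  have hdm : d * F.natDegree = e * G.natDegree := by
    have h' := congrArg natDegree h
    rwa [natDegree_pow, natDegree_pow] at h'
  have hm2 : 2 ≤ F.natDegree := by
    rcases Nat.lt_or_ge F.natDegree 2 with hlt2 | hge
    · exfalso
      have hm1 : F.natDegree = 1 := by omega
      rw [hm1, mul_one] at hdm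
      have : e ≤ e * G.natDegree := Nat.le_mul_of_pos_right e (by omega)
      omega
    · exact hge
  cases T with
  | nil =>
    rw [compList_nil] at hFdef
    rw [hFdef, natDegree_X] at hm2
    omega
  | cons ψ T' =>
    obtain ⟨a, ha2, b, hb, rfl⟩ := hT ψ (List.mem_cons_self)
    obtain ⟨hRm, hR1⟩ := compList_monic (fun φ hφ => hT φ (List.mem_cons_of_mem _ hφ))
    set R := compList T' with hRdef
    have hFR : F = R ^ a + C b := by rw [hFdef, compList_cons']
    -- extract the gcd
    set g := Nat.gcd d e with hgdef
    have hg0 : 0 < g := Nat.gcd_pos_of_pos_left e (by omega)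
    set d' := d / g with hd'def
    set e' := e / g with he'def
    have hdd : d' * g = d := Nat.div_mul_cancel (Nat.gcd_dvd_left d e)
    have hee : e' * g = e := Nat.div_mul_cancel (Nat.gcd_dvd_right d e)
    have hcop : Nat.Coprime d' e' := Nat.coprime_div_gcd_div_gcd hg0
    have hd'1 : 1 ≤ d' := by
      rcases Nat.eq_zero_or_pos d' with h0 | h1
      · rw [h0, zero_mul] at hdd; omega
      · exact h1
    have hlt' : d' < e' := by
      by_contra hcon
      push_neg at hcon
      have : e' * g ≤ d' * g := Nat.mul_le_mul_right g hcon
      omega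
    have he'2 : 2 ≤ e' := by omega
    have hpow' : F ^ d' = G ^ e' :=
      monic_pow_cancel (hFm.pow _) (hGm.pow _) hg0
        (by rw [← pow_mul, ← pow_mul, hdd, hee, h])
    obtain ⟨H, hH⟩ := exists_pow_eq hFm hGm (by omega) hcop hpow'
    have hH1 : 1 ≤ H.natDegree := by
      have h' := congrArg natDegree hH
      rw [natDegree_pow] at h'
      rcases Nat.eq_zero_or_pos H.natDegree with h0 | h1
      · rw [h0, mul_zero] at h'; omega
      · exact h1
    exact masonA ha2 he'2 hR1 hH1 hb (by rw [← hFR, hH])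

end UnicritAux

open UnicritAux

theorem stmt4 (k : Type*) [Field k] [CharZero k]
    (L₁ L₂ : List (Polynomial k))
    (h₁ : ∀ φ ∈ L₁, φ ∈ unicritSet k)
    (h₂ : ∀ φ ∈ L₂, φ ∈ unicritSet k)
    (heq : compList L₁ = compList L₂) :
    L₁ = L₂ := by
  induction L₁ generalizing L₂ with
  | nil =>
    cases L₂ with
    | nil => rfl
    | cons ψ T₂ =>
      exfalso
      have h2 := two_le_natDegree_compList h₂ (by simp)
      rw [← heq, compList_nil, natDegree_X] at h2
      omega
  | cons φ T₁ ih =>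
    cases L₂ with
    | nil =>
      exfalso
      have h2 := two_le_natDegree_compList h₁ (by simp)
      rw [heq, compList_nil, natDegree_X] at h2
      omega
    | cons ψ T₂ =>
      have hT₁ : ∀ φ' ∈ T₁, φ' ∈ unicritSet k :=
        fun φ' hφ' => h₁ φ' (List.mem_cons_of_mem _ hφ')
      have hT₂ : ∀ φ' ∈ T₂, φ' ∈ unicritSet k :=
        fun φ' hφ' => h₂ φ' (List.mem_cons_of_mem _ hφ')
      obtain ⟨d, hd, c, hc, rfl⟩ := h₁ φ (List.mem_cons_self)
      obtain ⟨e, he, c', hc', rfl⟩ := h₂ ψ (List.mem_cons_self)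
      obtain ⟨hFm, hF1⟩ := compList_monic hT₁
      obtain ⟨hGm, hG1⟩ := compList_monic hT₂
      rw [compList_cons', compList_cons'] at heq
      set F := compList T₁ with hFdef
      set G := compList T₂ with hGdef
      -- first, c = c'
      have hcc : c = c' := by
        by_contra hne
        exact masonA hd he hF1 hG1 (sub_ne_zero.mpr hne)
          (by rw [C_sub]; linear_combination heq)
      subst hcc
      have hpow : F ^ d = G ^ e := by
        have := heq
        exact add_right_cancel this
      have hde : d = e := by
        by_contra hne
        rcases Nat.lt_or_ge d e with hlt | hge
        · exact no_lt hT₁ hGm hG1 hd hlt hpow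
        · exact no_lt hT₂ hFm hF1 he (by omega) hpow.symm
      subst hde
      have hFG : F = G := monic_pow_cancel hFm hGm (by omega) hpow
      rw [ih T₂ hT₁ hT₂ (hFG.trans hGdef)]
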